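/- arXiv:1102.3980 — 4 statements merged into one kernel-verified Lean document; each statement's English description precedes it below -/
import Mathlib

section
/- Every word-representable simple graph has a uniform word-representant; that is, if a simple graph G admits a word-representant, then it admits a word-representant W that is k-uniform for some k ≥ 1. -/
/-!
Appending to a word `w` one copy of each letter occurring fewer than `k` times, ordered by last
occurrence in `w`, preserves alternation: if the subsequence of `x` and `y` alternates and ends
with `…yx`, then `x` occurs at least as often as `y`, so `y` is appended whenever `x` is, and
the appended letters contribute `yx`, `y` or nothing. Non-alternation survives because `w` is a
prefix. Starting from a representant `w` and `k = |w| + 1` (positive even when `w` is empty),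
`k` such steps raise every count to exactly `k`.
-/

open Classical

/-- Distinct letters `x` and `y` alternate in the word `w`: both occur in `w`, and the
subsequence of `w` consisting of the occurrences of `x` and `y` is strictly alternating. -/
def Alternate {V : Type*} (w : List V) (x y : V) : Prop :=
  x ∈ w ∧ y ∈ w ∧ (w.filter fun z => decide (z = x ∨ z = y)).Chain' (· ≠ ·)

/-- The word `w` is a word-representant of the simple graph `G`: every vertex occurs in `w`,
and two distinct vertices alternate in `w` iff they are adjacent in `G`. -/
def Represents {V : Type*} (G : SimpleGraph V) (w : List V) : Prop :=
  (∀ v : V, v ∈ w) ∧ ∀ x y : V, x ≠ y → (Alternate w x y ↔ G.Adj x y)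

/-- A simple graph is word-representable if it has a word-representant. -/
def WordRepresentable {V : Type*} (G : SimpleGraph V) : Prop :=
  ∃ w : List V, Represents G w

namespace List

variable {α : Type*} [DecidableEq α]

theorem dedup_filter (p : α → Bool) (l : List α) : (l.filter p).dedup = l.dedup.filter p := by
  induction l with
  | nil => rfl
  | cons a t ih =>
    by_cases hp : p a <;> by_cases ha : a ∈ t <;> simp [hp, ha, ih]

theorem count_le_count_of_head?_ne {a b : α} :
    ∀ {l : List α}, l.IsChain (· ≠ ·) → (∀ z ∈ l, z = a ∨ z = b) → l.head? ≠ some b →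
      l.count b ≤ l.count a
  | [], _, _, _ => by simp
  | [c], _, hl, hhead => by
    obtain rfl : c = a := (hl c (by simp)).resolve_right (by simpa using hhead)
    rw [count_singleton_self]
    exact count_le_length
  | c :: d :: s, hc, hl, hhead => by
    obtain rfl : c = a := (hl c (by simp)).resolve_right (by simpa using hhead)
    have hcd : c ≠ d := (isChain_cons_cons.mp hc).1
    obtain rfl : d = b := (hl d (by simp)).resolve_left hcd.symm
    have hs : s.count d ≤ s.count c := by
      refine count_le_count_of_head?_ne (isChain_cons_cons.mp hc).2.tail
        (fun z hz => hl z (by simp [hz])) fun h => ?_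
      exact (isChain_cons.mp (isChain_cons_cons.mp hc).2).1 d (by simp [h]) rfl
    simp only [count_cons, beq_iff_eq, hcd, hcd.symm, if_true, if_false]
    omega

theorem count_le_count_of_getLast?_ne {a b : α} {l : List α} (hc : l.IsChain (· ≠ ·))
    (hl : ∀ z ∈ l, z = a ∨ z = b) (hlast : l.getLast? ≠ some b) : l.count b ≤ l.count a := by
  rw [← count_reverse, ← count_reverse (l := l)]
  exact count_le_count_of_head?_ne (isChain_reverse.mpr (hc.imp fun _ _ h => h.symm))
    (fun z hz => hl z (mem_reverse.mp hz)) (by rwa [head?_reverse])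

theorem dedup_eq_pair_of_getLast? {a b : α} {l : List α} (hab : a ≠ b)
    (hc : l.IsChain (· ≠ ·)) (hl : ∀ z ∈ l, z = a ∨ z = b) (hb : b ∈ l)
    (hlast : l.getLast? = some a) : l.dedup = [b, a] := by
  obtain ⟨l', rfl⟩ := getLast?_eq_some_iff.mp hlast
  have hb' : b ∈ l' := by simpa [hab.symm] using hb
  obtain ⟨c, hc'⟩ : ∃ c, l'.getLast? = some c := Option.isSome_iff_exists.mp
    (getLast?_isSome.mpr (ne_nil_of_mem hb'))
  obtain ⟨l'', rfl⟩ := getLast?_eq_some_iff.mp hc'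
  have hca : c ≠ a := by simpa using (isChain_append.mp hc).2.2
  obtain rfl : c = b := (hl c (by simp)).resolve_left hca
  have hsub : l'' ⊆ [c, a] := fun z hz => by simpa [or_comm] using hl z (by simp [hz])
  rw [append_assoc, singleton_append, dedup_append, Nodup.dedup (by simp [hca]),
    Subset.union_eq_right hsub]

theorem isChain_append_dedup_filter_count_lt {a b : α} {l : List α} {k : ℕ} (hab : a ≠ b)
    (hc : l.IsChain (· ≠ ·)) (hl : ∀ z ∈ l, z = a ∨ z = b) (hb : b ∈ l)
    (hlast : l.getLast? = some a) :
    (l ++ (l.filter fun v => l.count v < k).dedup).IsChain (· ≠ ·) := by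
  set d := (l.filter fun v => l.count v < k).dedup
  suffices hd : ∀ c ∈ d.head?, c ≠ a by
    refine isChain_append.mpr ⟨hc, (nodup_dedup _).isChain, fun x hx y hy => ?_⟩
    obtain rfl : a = x := by simpa [hlast] using hx
    exact (hd y hy).symm
  intro c hc'
  by_cases hak : l.count a < k
  · have hall : ∀ z ∈ l, decide (l.count z < k) = true := fun z hz => by
      have := count_le_count_of_getLast?_ne hc hl (by simp [hlast, hab])
      rcases hl z hz with rfl | rfl <;> simp <;> omega
    have hd : d = [b, a] := by
      rw [show d = l.dedup from congrArg dedup (filter_eq_self.mpr hall),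
        dedup_eq_pair_of_getLast? hab hc hl hb hlast]
    obtain rfl : b = c := by simpa [hd] using hc'
    exact hab.symm
  · have hck : l.count c < k := by
      simpa using (mem_filter.mp (mem_dedup.mp (mem_of_mem_head? hc'))).2
    rintro rfl
    exact hak hck

end List

section AppendDeficient

variable {α : Type*} [DecidableEq α]

def appendDeficient (k : ℕ) (w : List α) : List α :=
  w ++ w.dedup.filter fun v => w.count v < k

@[simp]
theorem mem_appendDeficient {k : ℕ} {w : List α} {v : α} : v ∈ appendDeficient k w ↔ v ∈ w := by
  simp only [appendDeficient, List.mem_append, List.mem_filter, List.mem_dedup]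
  tauto

theorem filter_appendDeficient (q : α → Bool) (k : ℕ) (w : List α) :
    (appendDeficient k w).filter q =
      w.filter q ++ ((w.filter q).filter fun v => w.count v < k).dedup := by
  rw [appendDeficient, List.filter_append, List.dedup_filter, List.dedup_filter,
    List.filter_filter, List.filter_filter]
  congr 1
  exact List.filter_congr fun z _ => Bool.and_comm _ _

theorem isChain_filter_appendDeficient_iff {k : ℕ} {w : List α} {x y : α} (q : α → Bool)
    (hq : ∀ z, q z = true ↔ z = x ∨ z = y) (hxy : x ≠ y) (hx : x ∈ w) (hy : y ∈ w) :
    ((appendDeficient k w).filter q).IsChain (· ≠ ·) ↔ (w.filter q).IsChain (· ≠ ·) := by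
  rw [filter_appendDeficient]
  set l := w.filter q
  have hl : ∀ z ∈ l, z = x ∨ z = y := fun z hz => (hq z).mp (List.mem_filter.mp hz).2
  have hcount : ∀ z ∈ l, l.count z = w.count z := fun z hz =>
    List.count_filter (List.mem_filter.mp hz).2
  rw [List.filter_congr (p := fun v => decide (w.count v < k))
    (q := fun v => decide (l.count v < k)) fun z hz => by rw [hcount z hz]]
  refine ⟨fun h => (List.isChain_append.mp h).1, fun hc => ?_⟩
  have hxl : x ∈ l := List.mem_filter.mpr ⟨hx, (hq x).mpr (.inl rfl)⟩
  have hyl : y ∈ l := List.mem_filter.mpr ⟨hy, (hq y).mpr (.inr rfl)⟩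
  obtain ⟨a, hlast⟩ : ∃ a, l.getLast? = some a := Option.isSome_iff_exists.mp
    (List.getLast?_isSome.mpr (List.ne_nil_of_mem hxl))
  rcases hl a (List.mem_of_getLast? hlast) with rfl | rfl
  · exact List.isChain_append_dedup_filter_count_lt hxy hc hl hyl hlast
  · exact List.isChain_append_dedup_filter_count_lt hxy.symm hc
      (fun z hz => (hl z hz).symm) hxl hlast

theorem alternate_appendDeficient_iff {k : ℕ} {w : List α} {x y : α} (hxy : x ≠ y) :
    Alternate (appendDeficient k w) x y ↔ Alternate w x y := by
  simp only [Alternate, mem_appendDeficient]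
  exact and_congr_right fun hx => and_congr_right fun hy =>
    isChain_filter_appendDeficient_iff _ (fun z => by simp) hxy hx hy

theorem count_appendDeficient {k : ℕ} {w : List α} {v : α} (hv : v ∈ w) (hk : w.count v ≤ k) :
    (appendDeficient k w).count v = min k (w.count v + 1) := by
  rw [appendDeficient, List.count_append]
  by_cases hvk : w.count v < k
  · rw [List.count_filter (by simpa using hvk), List.count_dedup, if_pos hv]
    omega
  · have h0 : (w.dedup.filter fun v => w.count v < k).count v = 0 :=
      List.count_eq_zero.mpr fun h => hvk (by simpa using (List.mem_filter.mp h).2)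
    rw [h0]
    omega

theorem mem_iterate_appendDeficient {k n : ℕ} {w : List α} {v : α} :
    v ∈ (appendDeficient k)^[n] w ↔ v ∈ w := by
  induction n with
  | zero => rfl
  | succ n ih => rw [Function.iterate_succ_apply', mem_appendDeficient, ih]

theorem count_iterate_appendDeficient {k : ℕ} {w : List α} {v : α} (hv : v ∈ w)
    (hk : w.count v ≤ k) (n : ℕ) :
    ((appendDeficient k)^[n] w).count v = min k (w.count v + n) := by
  induction n with
  | zero => simpa using hk
  | succ n ih =>
    rw [Function.iterate_succ_apply',
      count_appendDeficient (mem_iterate_appendDeficient.mpr hv) (by omega), ih]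
    omega

theorem represents_appendDeficient {G : SimpleGraph α} {w : List α} {k : ℕ}
    (hw : Represents G w) : Represents G (appendDeficient k w) :=
  ⟨fun v => mem_appendDeficient.mpr (hw.1 v),
    fun x y hxy => (alternate_appendDeficient_iff hxy).trans (hw.2 x y hxy)⟩

end AppendDeficient

/-- Every word-representable graph has a `k`-uniform word-representant for some `k ≥ 1`. -/
theorem every_representable_graph_has_uniform_representant
    {V : Type*} [DecidableEq V] (G : SimpleGraph V) (h : WordRepresentable G) :
    ∃ (W : List V) (k : ℕ), 1 ≤ k ∧ Represents G W ∧ ∀ v : V, W.count v = k := by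
  obtain ⟨w, hw⟩ := h
  have hk : ∀ v, w.count v ≤ w.length + 1 := fun v => (w.count_le_length).trans (by omega)
  refine ⟨(appendDeficient (w.length + 1))^[w.length + 1] w, w.length + 1, by omega,
    Function.Iterate.rec _ hw (fun _ => represents_appendDeficient) _, fun v => ?_⟩
  rw [count_iterate_appendDeficient (hw.1 v) (hk v)]
  omega
end

section
/- Let u = u₀u₁⋯uₙ be a uniform word and let Cu = u₁u₂⋯uₙu₀ be its cyclic shift. Then u and Cu have the same alternating graph; in particular, for any two distinct letters x and y occurring in u, x and y alternate in u if and only if they alternate in Cu. -/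
/-!
Restricted to the letters `x` and `y`, a uniform word becomes a two-letter word `w` with as many
`x`s as `y`s, and the cyclic shift of the word restricts to a rotation of `w`. If such a `w`
alternates, it has even length, so its last letter differs from its first: `w` alternates
if and only if it alternates cyclically, and cyclic alternation is invariant under rotation.
-/

open Classical

namespace List

variable {α : Type*}

theorem IsRotated.filter {l l' : List α} (h : l ~r l') (p : α → Bool) :
    l.filter p ~r l'.filter p := by
  obtain ⟨n, rfl⟩ := h
  rw [rotate_eq_drop_append_take_mod, filter_append]
  conv_lhs => rw [← take_append_drop (n % l.length) l, filter_append]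
  exact isRotated_append

variable [DecidableEq α] {x y : α}

theorem IsChain.head_ne_getLast_of_count_eq (hxy : x ≠ y) :
    ∀ {l : List α} (hl : l ≠ []), l ⊆ [x, y] → l.IsChain (· ≠ ·) → l.count x = l.count y →
      l.head hl ≠ l.getLast hl
  | [a], _, hsub, _, hcount => by
    have := hsub (mem_singleton_self a)
    grind
  | [a, b], _, _, hchain, _ => by simpa using hchain
  | a :: b :: c :: t, _, hsub, hchain, hcount => by
    obtain ⟨hab, hbc, hchain'⟩ : a ≠ b ∧ b ≠ c ∧ (c :: t).IsChain (· ≠ ·) := by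
      simpa only [isChain_cons_cons] using hchain
    obtain ⟨ha, hb, hsub'⟩ := cons_subset.mp hsub |>.imp_right cons_subset.mp
    have hc := hsub' mem_cons_self
    simp only [mem_cons, not_mem_nil, or_false] at ha hb hc
    -- `a ≠ b ≠ c` over two letters forces `a = c`, and `a :: b` holds one `x` and one `y`
    have hac : a = c := by grind
    have hcount' : (c :: t).count x = (c :: t).count y := by
      simp only [count_cons] at hcount ⊢
      grind
    simpa [hac] using head_ne_getLast_of_count_eq hxy (cons_ne_nil c t) hsub' hchain' hcount'

theorem isChain_ne_iff_cycle_chain_of_count_eq (hxy : x ≠ y) {l : List α} (hsub : l ⊆ [x, y])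
    (hcount : l.count x = l.count y) :
    l.IsChain (· ≠ ·) ↔ Cycle.Chain (· ≠ ·) (l : Cycle α) := by
  rcases l with _ | ⟨a, t⟩
  · simp
  rw [Cycle.chain_ne_nil _ (cons_ne_nil a t), isChain_cons_cons]
  refine ⟨fun h => ⟨?_, h⟩, And.right⟩
  exact (h.head_ne_getLast_of_count_eq hxy (cons_ne_nil a t) hsub hcount).symm

theorem isChain_ne_filter_iff_of_isRotated (hxy : x ≠ y) {p : α → Bool}
    (hp : ∀ z, p z = true ↔ z = x ∨ z = y) {l l' : List α} (h : l ~r l')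
    (hcount : l.count x = l.count y) :
    (l.filter p).IsChain (· ≠ ·) ↔ (l'.filter p).IsChain (· ≠ ·) := by
  have hsub (m : List α) : m.filter p ⊆ [x, y] := fun z hz => by
    simpa [← hp] using (mem_filter.mp hz).2
  have hcount_filter (m : List α) (hm : m.count x = m.count y) :
      (m.filter p).count x = (m.filter p).count y := by
    rwa [count_filter ((hp x).mpr (.inl rfl)), count_filter ((hp y).mpr (.inr rfl))]
  have hcount' : l'.count x = l'.count y := by
    rwa [← h.perm.count_eq, ← h.perm.count_eq]
  rw [isChain_ne_iff_cycle_chain_of_count_eq hxy (hsub l) (hcount_filter l hcount),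
    isChain_ne_iff_cycle_chain_of_count_eq hxy (hsub l') (hcount_filter l' hcount'),
    Cycle.coe_eq_coe.mpr (h.filter p)]

end List

theorem alternate_iff_alternate_cyclicShift_of_uniform_general
    {V : Type*} [DecidableEq V] (u : List V) (k : ℕ)
    (huniform : ∀ v ∈ u, u.count v = k)
    (x y : V) (hxy : x ≠ y) (hx : x ∈ u) (hy : y ∈ u) :
    Alternate u x y ↔ Alternate (u.rotate 1) x y := by
  unfold Alternate
  rw [List.mem_rotate, List.mem_rotate]
  refine and_congr_right fun _ => and_congr_right fun _ => ?_
  exact List.isChain_ne_filter_iff_of_isRotated hxy (fun z => by simp) ⟨1, rfl⟩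
    ((huniform x hx).trans (huniform y hy).symm)

/-- A uniform word `u` and its cyclic shift `u.rotate 1 = u₁u₂⋯uₙu₀` have the same
alternating graph: any two distinct letters occurring in `u` alternate in `u`
iff they alternate in the cyclic shift of `u`. -/
theorem alternate_iff_alternate_cyclicShift_of_uniform
    {V : Type*} [DecidableEq V] (u : List V) (k : ℕ) (hk : 1 ≤ k)
    (huniform : ∀ v ∈ u, u.count v = k)
    (x y : V) (hxy : x ≠ y) (hx : x ∈ u) (hy : y ∈ u) :
    Alternate u x y ↔ Alternate (u.rotate 1) x y :=
  alternate_iff_alternate_cyclicShift_of_uniform_general u k huniform x y hxy hx hy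
end

section
/- Let n ≥ 3 and let C_{n+1} be the cycle graph on vertices {0, 1, …, n} labeled in consecutive order (so i and i+1 are adjacent for 0 ≤ i < n, n and 0 are adjacent, and there are no other edges). Then the word 0·1·2⋯n does not occur as a contiguous subword (factor) of any uniform word-representant of C_{n+1}. -/
open Classical

/-!
For letters `x ≠ y`, let the balance of a word be `#x - #y`. The occurrences of `x` and `y`
alternate exactly when the balances of all prefixes lie in two consecutive integers `{a, a + 1}`.
If `0 1 ⋯ n` is a factor `s · 0 1 ⋯ n · t` of a representant, then for every edge `{i, j}`, `i < j`,
the prefix `s · 0 ⋯ i` has balance one more than `s`, so `a = balance s`: every prefix is ahead of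
`s` by `0` or `1`. Adding these along the path `0, 1, 2` and subtracting the path `2, 3, …, n`
from the edge `{0, n}` pins the `(0, 2)`-balance of every prefix to `{b, b + 1}`, where `b` is its
value at `s`.
Hence `0` and `2` alternate, although they are not adjacent in the cycle once `n ≥ 3`.
-/

open List

section Balance

variable {V : Type*} [DecidableEq V] {x y : V}

namespace List

def balance (x y : V) (w : List V) : ℤ := w.count x - w.count y

@[simp]
theorem balance_nil : ([] : List V).balance x y = 0 := by simp [balance]

theorem balance_append (p q : List V) : (p ++ q).balance x y = p.balance x y + q.balance x y := by
  simp only [balance, count_append]; push_cast; ring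

theorem balance_add_balance (w : List V) (x y z : V) :
    w.balance x y + w.balance y z = w.balance x z := by
  simp only [balance]; ring

theorem balance_filter (w : List V) {p : V → Bool} (hx : p x) (hy : p y) :
    (w.filter p).balance x y = w.balance x y := by
  simp only [balance, count_filter hx, count_filter hy]

theorem balance_singleton_of_mem (hxy : x ≠ y) {c : V} (hc : c = x ∨ c = y) :
    [c].balance x y = if c = x then 1 else -1 := by
  rcases hc with rfl | rfl <;> simp [balance, hxy, hxy.symm]

theorem balance_singleton_eq_neg_of_ne (hxy : x ≠ y) {c d : V} (hc : c = x ∨ c = y)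
    (hd : d = x ∨ d = y) (hcd : c ≠ d) : [d].balance x y = -[c].balance x y := by
  rcases hc with rfl | rfl <;> rcases hd with rfl | rfl <;>
    simp_all [balance_singleton_of_mem, Ne.symm]

theorem IsChain.balance_eq_zero_or_of_prefix (hxy : x ≠ y) {g : List V}
    (hg : ∀ c ∈ g, c = x ∨ c = y) (hchain : g.IsChain (· ≠ ·)) {q : List V} (hq : q <+: g) :
    q.balance x y = 0 ∨ q.balance x y = (g.take 1).balance x y := by
  induction g generalizing q with
  | nil => simp [prefix_nil.1 hq]
  | cons c g ih =>
    obtain rfl | ⟨q, hq', rfl⟩ : q = [] ∨ ∃ q', q' <+: g ∧ q = c :: q' := by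
      cases q with
      | nil => exact .inl rfl
      | cons c' q' => obtain ⟨rfl, h⟩ := cons_prefix_cons.1 hq; exact .inr ⟨q', h, rfl⟩
    · simp
    rw [← singleton_append, balance_append, take_succ_cons, take_zero]
    cases g with
    | nil => simp [prefix_nil.1 hq']
    | cons d g =>
      have hd := balance_singleton_eq_neg_of_ne hxy (hg c (by simp)) (hg d (by simp))
        (isChain_cons_cons.1 hchain).1
      rcases ih (fun z hz => hg z (mem_cons_of_mem c hz)) hchain.tail hq' with h | h <;>
        simp only [h, hd, take_succ_cons, take_zero] <;> omega

theorem abs_balance_le_length (w : List V) : |w.balance x y| ≤ w.length := by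
  have := w.count_le_length (a := x)
  have := w.count_le_length (a := y)
  rw [balance, abs_le]; omega

end List

theorem isChain_filter_iff_exists_balance (hxy : x ≠ y) {p : V → Bool}
    (hp : ∀ z, p z ↔ z = x ∨ z = y) {w : List V} :
    (w.filter p).IsChain (· ≠ ·) ↔
      ∃ a : ℤ, ∀ q, q <+: w → a ≤ q.balance x y ∧ q.balance x y ≤ a + 1 := by
  have hbal (q : List V) : (q.filter p).balance x y = q.balance x y :=
    balance_filter q ((hp x).2 (.inl rfl)) ((hp y).2 (.inr rfl))
  have hmem (c : V) (hc : c ∈ w.filter p) : c = x ∨ c = y := (hp c).1 (of_mem_filter hc)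
  refine ⟨fun h => ?_, fun ⟨a, ha⟩ => ?_⟩
  · set b := ((w.filter p).take 1).balance x y
    have hb : |b| ≤ 1 := (abs_balance_le_length _).trans (by simp)
    refine ⟨min 0 b, fun q hq => ?_⟩
    rw [abs_le] at hb
    rcases h.balance_eq_zero_or_of_prefix hxy hmem (hq.filter p) with h0 | h0 <;>
      rw [hbal] at h0 <;> omega
  · rw [isChain_iff_forall_rel_of_append_cons_cons]
    rintro c _ l₁ l₂ hw rfl
    obtain ⟨q₁, hq₁, rfl⟩ := prefix_filter_iff.1 (hw ▸ prefix_append l₁ (c :: c :: l₂))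
    obtain ⟨q₂, hq₂, e₂⟩ : ∃ q₂, q₂ <+: w ∧ q₁.filter p ++ [c, c] = q₂.filter p :=
      prefix_filter_iff.1 (hw ▸ ⟨l₂, by simp⟩)
    have hc := balance_singleton_of_mem hxy (hmem c (hw ▸ by simp))
    have h₂ := congrArg (balance x y) e₂
    rw [balance_append, ← singleton_append, balance_append, hbal, hbal] at h₂
    have := ha q₁ hq₁
    have := ha q₂ hq₂
    split_ifs at hc <;> omega

theorem alternate_iff_exists_balance (hxy : x ≠ y) {w : List V} :
    Alternate w x y ↔ x ∈ w ∧ y ∈ w ∧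
      ∃ a : ℤ, ∀ q, q <+: w → a ≤ q.balance x y ∧ q.balance x y ≤ a + 1 :=
  and_congr_right fun _ => and_congr_right fun _ => by
    refine isChain_filter_iff_exists_balance hxy fun _ => ?_
    simp only [decide_eq_true_eq]

theorem Alternate.balance_bounds (hxy : x ≠ y) {w s r q : List V} (h : Alternate w x y)
    (hsr : s ++ r <+: w) (hr : r.balance x y = 1) (hq : q <+: w) :
    s.balance x y ≤ q.balance x y ∧ q.balance x y ≤ s.balance x y + 1 := by
  obtain ⟨-, -, a, ha⟩ := (alternate_iff_exists_balance hxy).1 h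
  have hs := ha s ((prefix_append s r).trans hsr)
  have hsr := ha _ hsr
  rw [balance_append, hr] at hsr
  have := ha q hq
  omega

theorem balance_le_balance_of_forall_succ (f : ℕ → V) {s q : List V} {i j : ℕ} (hij : i ≤ j)
    (h : ∀ l, i ≤ l → l < j → s.balance (f l) (f (l + 1)) ≤ q.balance (f l) (f (l + 1))) :
    s.balance (f i) (f j) ≤ q.balance (f i) (f j) := by
  induction j, hij using Nat.le_induction with
  | base => simp [balance]
  | succ j hij ih =>
    rw [← balance_add_balance s _ (f j), ← balance_add_balance q _ (f j)]
    have := ih fun l h₁ h₂ => h l h₁ (by omega)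
    have := h j hij (by omega)
    omega

end Balance

-- Vertices are casts `(j : Fin (n + 1))` of naturals, so the closing edge `{n, 0}` of the cycle is
-- the step `n → n + 1` like all the others.
open Fin.NatCast

theorem balance_take_finRange {n i j : ℕ} (hij : i < j) (hj : j ≤ n) :
    ((finRange (n + 1)).take (i + 1)).balance (i : Fin (n + 1)) (j : Fin (n + 1)) = 1 := by
  have hi : (i : Fin (n + 1)) ∈ (finRange (n + 1)).take (i + 1) :=
    mem_take_iff_getElem.2 ⟨i, by simp; omega, by
      simp [Fin.ext_iff, Fin.val_natCast, Nat.mod_eq_of_lt (by omega : i < n + 1)]⟩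
  have hj : (j : Fin (n + 1)) ∉ (finRange (n + 1)).take (i + 1) := by
    intro hm
    obtain ⟨l, hl, e⟩ := mem_take_iff_getElem.1 hm
    have := congrArg Fin.val e
    simp [Fin.val_natCast, Nat.mod_eq_of_lt (by omega : j < n + 1)] at this hl
    omega
  rw [balance, count_eq_one_of_mem ((nodup_finRange _).sublist (take_sublist _ _)) hi,
    count_eq_zero_of_not_mem hj]
  rfl

theorem Represents.balance_bounds_of_finRange_infix {n : ℕ} {G : SimpleGraph (Fin (n + 1))}
    {s t q : List (Fin (n + 1))} (hrep : Represents G (s ++ finRange (n + 1) ++ t)) {i j : ℕ}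
    (hij : i < j) (hj : j ≤ n) (hadj : G.Adj i j) (hq : q <+: s ++ finRange (n + 1) ++ t) :
    s.balance (i : Fin (n + 1)) j ≤ q.balance (i : Fin (n + 1)) j ∧
      q.balance (i : Fin (n + 1)) j ≤ s.balance (i : Fin (n + 1)) j + 1 := by
  refine ((hrep.2 _ _ hadj.ne).2 hadj).balance_bounds hadj.ne ?_
    (balance_take_finRange hij hj) hq
  rw [append_assoc]
  exact (prefix_append_right_inj s).2 ((take_prefix _ _).trans (prefix_append _ t))

open SimpleGraph

theorem cycleGraph_adj_natCast_succ (m j : ℕ) :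
    (cycleGraph (m + 2)).Adj (j : Fin (m + 2)) ((j + 1 : ℕ) : Fin (m + 2)) :=
  cycleGraph_adj.2 (.inr (by push_cast; simp))

theorem cycleGraph_not_adj_zero_two (m : ℕ) : ¬(cycleGraph (m + 4)).Adj 0 2 := by
  rw [cycleGraph_adj, sub_eq_iff_eq_add, sub_eq_iff_eq_add]
  simp [Fin.ext_iff, Fin.val_add, Nat.mod_eq_of_lt (by omega : 3 < m + 4),
    Nat.mod_eq_of_lt (by omega : 2 < m + 4)]

theorem finRange_not_infix_of_uniform_representant_of_cycle_general
    (n : ℕ) (hn : 3 ≤ n) (u : List (Fin (n + 1)))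
    (hrep : Represents (SimpleGraph.cycleGraph (n + 1)) u) :
    ¬ List.finRange (n + 1) <:+: u := by
  rintro ⟨s, t, rfl⟩
  obtain ⟨m, rfl⟩ : ∃ m, n = m + 3 := ⟨n - 3, by omega⟩
  have hstep (l : ℕ) (hl : l < m + 3) {q} (hq : q <+: s ++ finRange (m + 4) ++ t) :
      s.balance (l : Fin (m + 4)) (l + 1 : ℕ) ≤ q.balance (l : Fin (m + 4)) (l + 1 : ℕ) :=
    (hrep.balance_bounds_of_finRange_infix (Nat.lt_succ_self l) hl
      (cycleGraph_adj_natCast_succ (m + 2) l) hq).1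
  have hwrap : (cycleGraph (m + 4)).Adj (0 : ℕ) (m + 3 : ℕ) := by
    simpa using (cycleGraph_adj_natCast_succ (m + 2) (m + 3)).symm
  have hne : (0 : Fin (m + 4)) ≠ 2 := by
    simp [Fin.ext_iff, Nat.mod_eq_of_lt (by omega : 2 < m + 4)]
  have h02 : Alternate (s ++ finRange (m + 4) ++ t) 0 2 := by
    refine (alternate_iff_exists_balance hne).2
      ⟨hrep.1 _, hrep.1 _, s.balance 0 2, fun q hq => ?_⟩
    have h012 := balance_le_balance_of_forall_succ (Nat.cast : ℕ → Fin (m + 4))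
      (Nat.zero_le 2) fun l _ hl => hstep l (by omega) hq
    have h2n := balance_le_balance_of_forall_succ (Nat.cast : ℕ → Fin (m + 4))
      (by omega : 2 ≤ m + 3) fun l _ hl => hstep l hl hq
    have h0n := (hrep.balance_bounds_of_finRange_infix (by omega) le_rfl hwrap hq).2
    have hsplit_s := balance_add_balance s ((0 : ℕ) : Fin (m + 4)) (2 : ℕ) (m + 3 : ℕ)
    have hsplit_q := balance_add_balance q ((0 : ℕ) : Fin (m + 4)) (2 : ℕ) (m + 3 : ℕ)
    simp only [Nat.cast_zero, Nat.cast_ofNat] at h012 h2n h0n hsplit_s hsplit_q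
    constructor <;> linarith
  exact cycleGraph_not_adj_zero_two m ((hrep.2 _ _ hne).1 h02)

/-- For `n ≥ 3`, the word `0·1·2⋯n` (i.e. `List.finRange (n+1)`) is not a contiguous subword
(factor) of any uniform word-representant of the cycle `C_{n+1}` on `{0, 1, …, n}`,
whose vertices are labeled in consecutive order. -/
theorem finRange_not_infix_of_uniform_representant_of_cycle
    (n : ℕ) (hn : 3 ≤ n) (u : List (Fin (n + 1))) (k : ℕ) (hk : 1 ≤ k)
    (huniform : ∀ v : Fin (n + 1), u.count v = k)
    (hrep : Represents (SimpleGraph.cycleGraph (n + 1)) u) :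
    ¬ List.finRange (n + 1) <:+: u :=
  finRange_not_infix_of_uniform_representant_of_cycle_general n hn u hrep
end

section
/- Let u be a uniform word-representant of a simple graph G, and let a, b, c be three distinct vertices of G such that a is adjacent to b, a is adjacent to c, and b is not adjacent to c. Then, regarding u as a cyclic word, there exist two cyclically consecutive occurrences of a between which b occurs before c, and there also exist two cyclically consecutive occurrences of a between which c occurs before b. -/
open Classical

/-- Regarding `u` as a cyclic word, `s` is the segment lying strictly between two cyclically
consecutive occurrences of the letter `a`: some cyclic rotation of `u` has the form
`a :: s ++ a :: t'` where `a ∉ s` (two distinct cyclically consecutive occurrences of `a`),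
or the form `a :: s` with `a ∉ s` (then `a` occurs exactly once, and the cyclic interval
from that occurrence around to itself is `s`). -/
def IsCyclicGap {V : Type*} (u : List V) (a : V) (s : List V) : Prop :=
  ∃ (i : ℕ) (t : List V), u.rotate i = a :: (s ++ t) ∧ a ∉ s ∧
    (t = [] ∨ ∃ t' : List V, t = a :: t')

/-- In the segment `s`, some occurrence of the letter `b` precedes some occurrence of the
letter `c`. -/
def OccursBefore {V : Type*} (s : List V) (b c : V) : Prop :=
  ∃ s₁ s₂ s₃ : List V, s = s₁ ++ b :: (s₂ ++ c :: s₃)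

/-!
Since `b` and `c` do not alternate, one of them, say `x`, occurs twice in `u` with neither `b` nor
`c` in between, and since `a` alternates with `x`, an `a` lies between these two occurrences of
`x`. In a uniform word two alternating letters also alternate cyclically, so the cyclic gap opened
by the last such `a` contains the other letter `y` of `{b, c}`; as it also contains the second
occurrence of `x` before any `y`, there `x` occurs before `y`. The same argument applied to the
reversed word gives a gap in which `y` occurs before `x`.
-/

namespace List

variable {α : Type*}

theorem exists_eq_append_of_not_isChain_filter {p : α → Bool} {l : List α}
    (h : ¬ (l.filter p).IsChain (· ≠ ·)) :
    ∃ l₁ x l₂ l₃, l = l₁ ++ x :: (l₂ ++ x :: l₃) ∧ p x ∧ ∀ z ∈ l₂, ¬ p z := by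
  obtain ⟨x, y, f₁, f₂, hf, rfl⟩ : ∃ x y f₁ f₂, l.filter p = f₁ ++ x :: y :: f₂ ∧ x = y := by
    simpa [isChain_iff_forall_rel_of_append_cons_cons] using h
  obtain ⟨l₁, l', rfl, -, hl'⟩ := filter_eq_append_iff.1 hf
  obtain ⟨m₁, m₂, rfl, -, hx, hm₂⟩ := filter_eq_cons_iff.1 hl'
  obtain ⟨n₁, n₂, rfl, hn₁, -, -⟩ := filter_eq_cons_iff.1 hm₂
  exact ⟨l₁ ++ m₁, x, n₁, n₂, by simp, hx, hn₁⟩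

variable [DecidableEq α] {x y : α}

theorem IsChain.count_add_ite_getLast?_eq (hxy : x ≠ y) {l : List α}
    (hl : l.IsChain (· ≠ ·)) (hmem : ∀ z ∈ l, z = x ∨ z = y) :
    l.count x + (if l.getLast? = some y then 1 else 0) =
      l.count y + (if l.head? = some x then 1 else 0) := by
  induction hl with
  | nil => simp
  | singleton z => rcases hmem z (by simp) with rfl | rfl <;> simp [hxy, hxy.symm]
  | @cons_cons z w l hzw _ ih =>
    have ih := ih fun v hv => hmem v (mem_cons_of_mem _ hv)
    rw [getLast?_cons_cons, count_cons, count_cons]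
    have hyx := hxy.symm
    rcases hmem z (by simp) with rfl | rfl <;> rcases hmem w (by simp) with rfl | rfl <;>
      simp_all
    omega

/-- Equal counts force the first and the last letter to differ, so the alternation closes up
cyclically. -/
theorem IsChain.rotate_one_of_count_eq (hxy : x ≠ y) {l : List α}
    (hl : l.IsChain (· ≠ ·)) (hmem : ∀ z ∈ l, z = x ∨ z = y) (hcount : l.count x = l.count y) :
    (l.rotate 1).IsChain (· ≠ ·) := by
  rcases l with _ | ⟨z, l⟩
  · simp
  rw [rotate_cons_succ, rotate_zero]
  refine hl.tail.append (.singleton z) fun w hw v hv hwv => ?_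
  simp only [head?_cons, Option.mem_def, Option.some.injEq] at hv
  subst hwv hv
  have hw : l.getLast? = some z := by simpa using hw
  have := hl.count_add_ite_getLast?_eq hxy hmem
  rw [getLast?_cons, hw] at this
  rcases hmem z mem_cons_self with rfl | rfl <;> simp_all [hxy.symm]

theorem IsRotated.isChain_ne_of_count_eq (hxy : x ≠ y) {l l' : List α} (h : l ~r l')
    (hl : l.IsChain (· ≠ ·)) (hmem : ∀ z ∈ l, z = x ∨ z = y) (hcount : l.count x = l.count y) :
    l'.IsChain (· ≠ ·) := by
  obtain ⟨n, rfl⟩ := h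
  induction n with
  | zero => simpa
  | succ n ih =>
    rw [← rotate_rotate]
    refine ih.rotate_one_of_count_eq hxy (fun z hz => hmem z (mem_rotate.1 hz)) ?_
    simpa only [(rotate_perm l n).count_eq] using hcount

end List

section Words

open List

variable {V : Type*} {u s : List V} {a x y : V}

theorem Alternate.reverse (h : Alternate u x y) : Alternate u.reverse x y := by
  obtain ⟨hx, hy, hc⟩ := h
  refine ⟨mem_reverse.2 hx, mem_reverse.2 hy, ?_⟩
  show List.IsChain _ _
  rw [filter_reverse, isChain_reverse]
  exact hc.imp fun _ _ h e => h e.symm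

theorem OccursBefore.reverse (h : OccursBefore s x y) : OccursBefore s.reverse y x := by
  obtain ⟨s₁, s₂, s₃, rfl⟩ := h
  exact ⟨s₃.reverse, s₂.reverse, s₁.reverse, by simp⟩

theorem IsCyclicGap.reverse (h : IsCyclicGap u a s) : IsCyclicGap u.reverse a s.reverse := by
  obtain ⟨i, t, hi, has, ht⟩ := h
  have hu : u.reverse ~r (a :: (s ++ t)).reverse := hi ▸ IsRotated.reverse ⟨i, rfl⟩
  have has' : a ∉ s.reverse := by simpa using has
  rcases ht with rfl | ⟨t, rfl⟩
  · obtain ⟨j, hj⟩ := hu.trans (by simpa using IsRotated.cons_append_singleton.symm)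
    exact ⟨j, [], by simpa using hj, has', Or.inl rfl⟩
  · have hrot : (a :: (s ++ a :: t)).reverse ~r a :: (s.reverse ++ a :: t.reverse) := by
      have h₁ := isRotated_append (l := t.reverse ++ [a]) (l' := s.reverse ++ [a])
      rw [← append_assoc (s.reverse ++ [a])] at h₁
      simpa using h₁.trans IsRotated.cons_append_singleton.symm
    obtain ⟨j, hj⟩ := hu.trans hrot
    exact ⟨j, a :: t.reverse, hj, has', Or.inr ⟨_, rfl⟩⟩

theorem Alternate.mem_of_eq_append {u₁ u₂ u₃ : List V} (h : Alternate u a x)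
    (hu : u = u₁ ++ x :: (u₂ ++ x :: u₃)) (hx : x ∉ u₂) : a ∈ u₂ := by
  by_contra ha
  have hc : List.IsChain _ _ := h.2.2
  rw [hu, filter_append, filter_cons_of_pos (by simp), filter_append,
    filter_cons_of_pos (by simp), (filter_eq_nil_iff (l := u₂)).2 ?_, nil_append] at hc
  · simp at hc
  · intro z hz
    simp [ne_of_mem_of_not_mem hz ha, ne_of_mem_of_not_mem hz hx]

variable [DecidableEq V]

theorem Alternate.rotate (hxy : x ≠ y) (h : Alternate u x y) (hcount : u.count x = u.count y)
    (n : ℕ) : Alternate (u.rotate n) x y := by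
  obtain ⟨hx, hy, hc⟩ := h
  refine ⟨mem_rotate.2 hx, mem_rotate.2 hy, ?_⟩
  refine (IsRotated.filter ⟨n, rfl⟩ _).isChain_ne_of_count_eq hxy hc
    (fun z hz => by simpa using (mem_filter.1 hz).2) ?_
  rwa [count_filter (by simp), count_filter (by simp)]

theorem Alternate.mem_takeWhile {w : List V} (h : Alternate (a :: w) a y) (hay : a ≠ y) :
    y ∈ w.takeWhile (· ≠ a) := by
  obtain ⟨-, hy, hc⟩ := h
  replace hy : y ∈ w := (mem_cons.1 hy).resolve_left hay.symm
  replace hc : List.IsChain _ _ := hc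
  rw [filter_cons_of_pos (by simp), isChain_cons] at hc
  replace hc := hc.1
  induction w with
  | nil => simp at hy
  | cons z w ih =>
    by_cases hzy : z = y
    · subst hzy
      simp [hay.symm]
    have hza : z ≠ a := by
      rintro rfl
      simp at hc
    rw [takeWhile_cons_of_pos (by simpa using hza)]
    refine mem_cons_of_mem _ (ih ((mem_cons.1 hy).resolve_left (Ne.symm hzy)) ?_)
    rwa [filter_cons_of_neg (by simp [hza, hzy])] at hc

theorem isCyclicGap_takeWhile {w : List V} (h : u ~r a :: w) :
    IsCyclicGap u a (w.takeWhile (· ≠ a)) := by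
  obtain ⟨i, hi⟩ := h
  refine ⟨i, w.dropWhile (· ≠ a), by rw [hi, takeWhile_append_dropWhile],
    fun ha => by simpa using mem_takeWhile_imp ha, ?_⟩
  rcases hd : w.dropWhile (· ≠ a) with _ | ⟨z, t⟩
  · exact Or.inl rfl
  · have hz := head_dropWhile_not (· ≠ a) (l := w) (by rw [hd]; exact cons_ne_nil _ _)
    simp only [hd, head_cons, decide_eq_false_iff_not, not_not] at hz
    exact Or.inr ⟨t, by rw [hz]⟩

theorem exists_isCyclicGap_occursBefore_of_eq_append {u₁ u₂ u₃ : List V}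
    (hax : Alternate u a x) (hay : Alternate u a y) (hcount : u.count a = u.count y)
    (hax' : a ≠ x) (hay' : a ≠ y) (hxy : x ≠ y)
    (hu : u = u₁ ++ x :: (u₂ ++ x :: u₃)) (hxu₂ : x ∉ u₂) (hyu₂ : y ∉ u₂) :
    ∃ s, IsCyclicGap u a s ∧ OccursBefore s x y := by
  -- `w₂` is the part of `u₂` after its last `a`
  obtain ⟨w₂, w₁, haw₂, hw, -⟩ := exists_erase_eq (mem_reverse.2 (hax.mem_of_eq_append hu hxu₂))
  have hu₂ : u₂ = w₁.reverse ++ a :: w₂.reverse := by simpa using congrArg reverse hw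
  have haw₂ : ∀ z ∈ w₂.reverse, z ≠ a := fun z hz => ne_of_mem_of_not_mem hz (by simpa using haw₂)
  have hyw₂ : y ∉ w₂.reverse := fun h => hyu₂ (by simp [hu₂, h])
  obtain ⟨i, hi⟩ : u ~r a :: (w₂.reverse ++ x :: (u₃ ++ (u₁ ++ x :: w₁.reverse))) := by
    have := isRotated_append (l := u₁ ++ x :: w₁.reverse) (l' := a :: (w₂.reverse ++ x :: u₃))
    simpa [hu, hu₂] using this
  refine ⟨_, isCyclicGap_takeWhile ⟨i, hi⟩, ?_⟩
  have hy := hay.rotate hay' hcount i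
  rw [hi] at hy
  replace hy := hy.mem_takeWhile hay'
  rw [takeWhile_append_of_pos (by simpa using haw₂),
    takeWhile_cons_of_pos (by simpa using hax'.symm)] at hy ⊢
  obtain ⟨s₂, s₃, hs⟩ :=
    append_of_mem ((mem_cons.1 ((mem_append.1 hy).resolve_left hyw₂)).resolve_left hxy.symm)
  exact ⟨w₂.reverse, s₂, s₃, by rw [hs]⟩

theorem exists_isCyclicGap_occursBefore_and_swap_of_eq_append {u₁ u₂ u₃ : List V}
    (hax : Alternate u a x) (hay : Alternate u a y) (hcount : u.count a = u.count y)
    (hax' : a ≠ x) (hay' : a ≠ y) (hxy : x ≠ y)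
    (hu : u = u₁ ++ x :: (u₂ ++ x :: u₃)) (hxu₂ : x ∉ u₂) (hyu₂ : y ∉ u₂) :
    (∃ s, IsCyclicGap u a s ∧ OccursBefore s x y) ∧
      (∃ s, IsCyclicGap u a s ∧ OccursBefore s y x) := by
  refine ⟨exists_isCyclicGap_occursBefore_of_eq_append hax hay hcount hax' hay' hxy hu hxu₂ hyu₂,
    ?_⟩
  obtain ⟨s, hs, hys⟩ := exists_isCyclicGap_occursBefore_of_eq_append (u₁ := u₃.reverse)
    (u₂ := u₂.reverse) (u₃ := u₁.reverse) hax.reverse hay.reverse (by simpa) hax' hay' hxy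
    (by simp [hu]) (by simpa) (by simpa)
  exact ⟨s.reverse, by simpa using hs.reverse, by simpa using hys.reverse⟩

end Words

theorem exists_gap_orders_of_adj_adj_not_adj_general
    {V : Type*} [DecidableEq V] (G : SimpleGraph V) (u : List V) (k : ℕ)
    (huniform : ∀ v : V, u.count v = k) (hrep : Represents G u)
    (a b c : V) (hbc' : b ≠ c)
    (hab : G.Adj a b) (hac : G.Adj a c) (hbc : ¬ G.Adj b c) :
    (∃ s : List V, IsCyclicGap u a s ∧ OccursBefore s b c) ∧
    (∃ s : List V, IsCyclicGap u a s ∧ OccursBefore s c b) := by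
  have hAb : Alternate u a b := (hrep.2 a b (G.ne_of_adj hab)).2 hab
  have hAc : Alternate u a c := (hrep.2 a c (G.ne_of_adj hac)).2 hac
  have hcount : ∀ v w, u.count v = u.count w := fun v w => by rw [huniform, huniform]
  obtain ⟨u₁, x, u₂, u₃, hu, hx, hu₂⟩ := List.exists_eq_append_of_not_isChain_filter
    fun hC => hbc ((hrep.2 b c hbc').1 ⟨hrep.1 b, hrep.1 c, hC⟩)
  simp only [decide_eq_true_eq, not_or] at hx hu₂
  rcases hx with rfl | rfl
  · exact exists_isCyclicGap_occursBefore_and_swap_of_eq_append hAb hAc (hcount a c)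
      (G.ne_of_adj hab) (G.ne_of_adj hac) hbc' hu (fun h => (hu₂ x h).1 rfl)
      (fun h => (hu₂ c h).2 rfl)
  · exact (exists_isCyclicGap_occursBefore_and_swap_of_eq_append hAc hAb (hcount a b)
      (G.ne_of_adj hac) (G.ne_of_adj hab) hbc'.symm hu (fun h => (hu₂ x h).2 rfl)
      (fun h => (hu₂ b h).1 rfl)).symm

/-- If `u` is a uniform word-representant of `G` and `a, b, c` are distinct vertices with
`a` adjacent to both `b` and `c` but `b` not adjacent to `c`, then (viewing `u` as a cyclic
word) there are two cyclically consecutive occurrences of `a` between which `b` occurs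
before `c`, and two cyclically consecutive occurrences of `a` between which `c` occurs
before `b`. -/
theorem exists_gap_orders_of_adj_adj_not_adj
    {V : Type*} [DecidableEq V] (G : SimpleGraph V) (u : List V) (k : ℕ) (hk : 1 ≤ k)
    (huniform : ∀ v : V, u.count v = k) (hrep : Represents G u)
    (a b c : V) (hbc' : b ≠ c)
    (hab : G.Adj a b) (hac : G.Adj a c) (hbc : ¬ G.Adj b c) :
    (∃ s : List V, IsCyclicGap u a s ∧ OccursBefore s b c) ∧
    (∃ s : List V, IsCyclicGap u a s ∧ OccursBefore s c b) :=
  exists_gap_orders_of_adj_adj_not_adj_general G u k huniform hrep a b c hbc' hab hac hbc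
end
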